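/- Let (Δ,Θ) be a normalized directive bi-sequence of a binary generalized pseudostandard word, with Δ=δ₁δ₂…∈{0,1}^ℕ and Θ=ϑ₁ϑ₂…∈{E,R}^ℕ. Assume there exist a∈{0,1}, ϑ∈{E,R} and n₀∈ℕ such that for all n>n₀: δ_{n+1}=a if and only if ϑ_n=ϑ; assume further that both E and R occur infinitely many times in Θ. Then there exist a finite word ν over {0,1}, a finite sequence σ of antimorphisms from {E,R} with |ν|=|σ|, letters a,b∈{0,1}, an antimorphism ϑ∈{E,R} and i∈ℕ such that Δ=ν b a^i (a ā)^ω and Θ=σ ϑ^{i+1} (ϑ̄ ϑ)^ω, where ā denotes the letter of {0,1} distinct from a and ϑ̄ the antimorphism of {E,R} distinct from ϑ. -/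
import Mathlib


/-!
Generalized pseudostandard words (de Luca–De Luca) over binary and ternary
alphabets: antimorphisms, pseudopalindromic closure, directive bi-sequences.
-/

namespace GPS

variable {A : Type*} [Inhabited A]

/-- The involutory antimorphism on finite words induced by the letter map `f`:
reverse the word and apply `f` letterwise. -/
def anti (f : A → A) (w : List A) : List A := (w.map f).reverse

/-- `w` is an `f`-palindrome (a `ϑ`-palindrome for the antimorphism induced by `f`). -/
def IsPal (f : A → A) (w : List A) : Prop := anti f w = w

/-- The `f`-palindromic closure of `w`: a shortest `f`-palindrome having `w` as a
prefix (returns `w` itself in the degenerate case where none exists). -/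
noncomputable def closure (f : A → A) (w : List A) : List A := by
  classical
  exact if h : ∃ n : ℕ, ∃ p : List A, p.length = n ∧ w <+: p ∧ IsPal f p then
    Classical.choose (Nat.find_spec h)
  else w

/-- The sequence of pseudopalindromic prefixes `w_n` of the generalized
pseudostandard word `u(Δ, Θ)`; `prefixes Δ Θ n` is the paper's `w_n`, with
`Δ n = δ_{n+1}` and `Θ n = ϑ_{n+1}` (0-based indexing of the bi-sequence). -/
noncomputable def prefixes (Δ : ℕ → A) (Θ : ℕ → A → A) : ℕ → List A
  | 0 => []
  | n + 1 => closure (Θ n) (prefixes Δ Θ n ++ [Δ n])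

/-- The generalized pseudostandard word `u(Δ, Θ)` as an infinite word `ℕ → A`. -/
noncomputable def word (Δ : ℕ → A) (Θ : ℕ → A → A) (k : ℕ) : A :=
  (prefixes Δ Θ (k + 1)).getD k default

/-- `p` is a (finite) prefix of the infinite word `x`. -/
def IsPref (p : List A) (x : ℕ → A) : Prop := ∀ i < p.length, p.getD i default = x i

/-- `w` is a factor of the infinite word `x`. -/
def IsFactor (w : List A) (x : ℕ → A) : Prop :=
  ∃ i : ℕ, ∀ j < w.length, w.getD j default = x (i + j)

/-- `w` is a left special factor of the infinite word `x`. -/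
def LeftSpecial (w : List A) (x : ℕ → A) : Prop :=
  ∃ a b : A, a ≠ b ∧ IsFactor (a :: w) x ∧ IsFactor (b :: w) x

/-- The infinite word `x` is (eventually) periodic, i.e. of the form `z v^ω`
with `v` nonempty. -/
def Periodic (x : ℕ → A) : Prop :=
  ∃ p : ℕ, 0 < p ∧ ∃ N : ℕ, ∀ n, N ≤ n → x (n + p) = x n

/-- The infinite word `x` is purely periodic with period `q`, i.e. `x = q^ω`. -/
def PurePeriod (q : List A) (x : ℕ → A) : Prop :=
  q ≠ [] ∧ ∀ i : ℕ, x i = q.getD (i % q.length) default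

/-- Concatenation of `k` copies of the finite word `l`, i.e. `l^k`. -/
def wpow (l : List A) (k : ℕ) : List A := (List.replicate k l).flatten

/-! ### The binary alphabet `{0,1}` -/

/-- Letter map of the reversal antimorphism `R` over `{0,1}`. -/
def Rb : Fin 2 → Fin 2 := id

/-- Letter map of the exchange antimorphism `E` over `{0,1}` (`0 ↔ 1`). -/
def Eb : Fin 2 → Fin 2 := fun x => x + 1

/-- A binary directive bi-sequence is normalized if the sequence `(w_n)` contains
every prefix of `u(Δ,Θ)` that is an `R`-palindrome or an `E`-palindrome. -/
def NormalizedB (Δ : ℕ → Fin 2) (Θ : ℕ → Fin 2 → Fin 2) : Prop :=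
  ∀ p : List (Fin 2), IsPref p (word Δ Θ) → (IsPal Rb p ∨ IsPal Eb p) →
    ∃ n : ℕ, prefixes Δ Θ n = p

/-! ### The ternary alphabet `{0,1,2}` -/

/-- Letter map of the reversal antimorphism `R` over `{0,1,2}`. -/
def Rt : Fin 3 → Fin 3 := id

/-- Letter map of the exchange antimorphism `E_i` over `{0,1,2}`: it fixes `i`
and exchanges the other two letters (indeed `-(i+x) = i` iff `x = i` in `Fin 3`). -/
def Et (i : Fin 3) : Fin 3 → Fin 3 := fun x => -(i + x)

/-- A ternary directive bi-sequence is normalized if the sequence `(w_n)` contains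
every prefix of `u(Δ,Θ)` that is a `ϑ`-palindrome for some involutory antimorphism `ϑ`. -/
def NormalizedT (Δ : ℕ → Fin 3) (Θ : ℕ → Fin 3 → Fin 3) : Prop :=
  ∀ p : List (Fin 3), IsPref p (word Δ Θ) → (IsPal Rt p ∨ ∃ i : Fin 3, IsPal (Et i) p) →
    ∃ n : ℕ, prefixes Δ Θ n = p

end GPS
namespace GPS

set_option linter.unusedSectionVars false

section Aux
variable {A : Type*} [Inhabited A]
-- ### auxiliary
theorem anti_append (f : A → A) (l₁ l₂ : List A) :
    anti f (l₁ ++ l₂) = anti f l₂ ++ anti f l₁ := by simp [anti]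

theorem anti_length (f : A → A) (l : List A) : (anti f l).length = l.length := by simp [anti]

theorem anti_anti {f : A → A} (hf : ∀ x, f (f x) = x) (l : List A) :
    anti f (anti f l) = l := by
  simp only [anti, List.map_reverse, List.reverse_reverse, List.map_map]
  have : f ∘ f = id := funext hf
  simp [this]

theorem pal_ext {f : A → A} (hf : ∀ x, f (f x) = x) (x p : List A) (hp : IsPal f p) :
    IsPal f (x ++ p ++ anti f x) := by
  unfold IsPal at *
  rw [anti_append, anti_append, anti_anti hf, hp, List.append_assoc]

theorem closure_spec (f : A → A) (w : List A) (hex : ∃ p, w <+: p ∧ IsPal f p) :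
    w <+: closure f w ∧ IsPal f (closure f w) ∧
      ∀ p, w <+: p → IsPal f p → (closure f w).length ≤ p.length := by
  classical
  have h : ∃ n : ℕ, ∃ p : List A, p.length = n ∧ w <+: p ∧ IsPal f p := by
    obtain ⟨p, h1, h2⟩ := hex
    exact ⟨p.length, p, rfl, h1, h2⟩
  have hc : closure f w = Classical.choose (Nat.find_spec h) := by
    unfold closure; rw [dif_pos h]
  obtain ⟨hlen, hpref, hpal⟩ := Classical.choose_spec (Nat.find_spec h)
  refine ⟨hc ▸ hpref, hc ▸ hpal, fun p hp1 hp2 => ?_⟩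
  rw [hc, hlen]
  exact Nat.find_min' h ⟨p, rfl, hp1, hp2⟩

theorem getElem_anti (f : A → A) (l : List A) (i : ℕ) (h : i < (anti f l).length) :
    (anti f l)[i] = f (l[l.length - 1 - i]'(by simp [anti_length] at h; omega)) := by
  simp only [anti, List.getElem_reverse, List.getElem_map]
  congr 1
  simp only [List.length_map]

-- affine maps on Fin 2
def aff (c : Fin 2) : Fin 2 → Fin 2 := fun x => x + c

theorem Rb_aff : Rb = aff 0 := by funext x; revert x; decide
theorem Eb_aff : Eb = aff 1 := by funext x; revert x; decide
theorem aff_aff (c : Fin 2) (x : Fin 2) : aff c (aff c x) = x := by revert c x; decide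
theorem aff_inj {c c' : Fin 2} (h : aff c = aff c') : c = c' := by
  have := congrFun h 0; revert this; revert c c'; decide

/-- index-level palindrome of charge `c`. -/
def IPal (u : ℕ → Fin 2) (c : Fin 2) (K : ℕ) : Prop :=
  ∀ i, i < K → u (K - 1 - i) = u i + c

/-- bridge: a list whose entries are `v i` is an `aff c`-palindrome iff index condition. -/
theorem isPal_iff_idx (c : Fin 2) (v : ℕ → Fin 2) (l : List (Fin 2))
    (hl : ∀ i (h : i < l.length), l[i] = v i) :
    IsPal (aff c) l ↔ ∀ i, i < l.length → v (l.length - 1 - i) = v i + c := by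
  constructor
  · intro hpal i hi
    have h1 : (anti (aff c) l)[i]'(by rwa [anti_length]) = l[i]'hi :=
      List.getElem_of_eq hpal _
    rw [getElem_anti] at h1
    rw [hl i hi] at h1
    rw [hl (l.length - 1 - i) (by omega)] at h1
    have := congrArg (aff c) h1
    rw [aff_aff] at this
    rw [this]; rfl
  · intro hidx
    have hlen : (anti (aff c) l).length = l.length := anti_length _ _
    apply List.ext_getElem hlen
    intro i h1 h2
    rw [getElem_anti]
    rw [hl i h2, hl (l.length - 1 - i) (by omega)]
    show aff c (v (l.length - 1 - i)) = v i
    rw [hidx i h2]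
    exact aff_aff c (v i)

end Aux

-- ### prefixes machinery (binary)
section Machinery
variable (Δ : ℕ → Fin 2) (Θ : ℕ → Fin 2 → Fin 2)
variable (hΘ : ∀ n, Θ n = Rb ∨ Θ n = Eb)
include hΘ

theorem theta_inv (n : ℕ) : ∀ x, Θ n (Θ n x) = x := by
  rcases hΘ n with h | h <;> rw [h] <;> decide

theorem theta_aff (n : ℕ) : ∃ c : Fin 2, Θ n = aff c := by
  rcases hΘ n with h | h
  · exact ⟨0, by rw [h, Rb_aff]⟩
  · exact ⟨1, by rw [h, Eb_aff]⟩

theorem hex_step (n : ℕ) :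
    ∃ p, (prefixes Δ Θ n ++ [Δ n]) <+: p ∧ IsPal (Θ n) p := by
  refine ⟨(prefixes Δ Θ n ++ [Δ n]) ++ anti (Θ n) (prefixes Δ Θ n ++ [Δ n]), ⟨_, rfl⟩, ?_⟩
  have := pal_ext (theta_inv Θ hΘ n) (prefixes Δ Θ n ++ [Δ n]) [] (by simp [IsPal, anti])
  simpa using this

theorem pref_succ (n : ℕ) :
    prefixes Δ Θ n ++ [Δ n] <+: prefixes Δ Θ (n+1) :=
  (closure_spec _ _ (hex_step Δ Θ hΘ n)).1

theorem pal_succ (n : ℕ) : IsPal (Θ n) (prefixes Δ Θ (n+1)) :=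
  (closure_spec _ _ (hex_step Δ Θ hΘ n)).2.1

theorem min_succ (n : ℕ) :
    ∀ p, (prefixes Δ Θ n ++ [Δ n]) <+: p → IsPal (Θ n) p →
      (prefixes Δ Θ (n+1)).length ≤ p.length :=
  (closure_spec _ _ (hex_step Δ Θ hΘ n)).2.2

theorem len_succ (n : ℕ) :
    (prefixes Δ Θ n).length + 1 ≤ (prefixes Δ Θ (n+1)).length := by
  have h := (pref_succ Δ Θ hΘ n).length_le
  simpa using h

theorem len_strict_mono {m n : ℕ} (h : m < n) :
    (prefixes Δ Θ m).length < (prefixes Δ Θ n).length := by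
  induction n with
  | zero => omega
  | succ k ih =>
    have h2 := len_succ Δ Θ hΘ k
    rcases Nat.lt_succ_iff_lt_or_eq.mp h with h' | h'
    · exact lt_of_lt_of_le (ih h') (by omega)
    · subst h'; omega

theorem len_ge (n : ℕ) : n ≤ (prefixes Δ Θ n).length := by
  induction n with
  | zero => omega
  | succ k ih => have := len_succ Δ Θ hΘ k; omega

theorem pref_mono {m n : ℕ} (h : m ≤ n) : prefixes Δ Θ m <+: prefixes Δ Θ n := by
  induction n with
  | zero => rw [Nat.le_zero.mp h]
  | succ k ih =>
    rcases Nat.le_succ_iff.mp h with h' | h'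
    · exact (ih h').trans ((List.prefix_append _ _).trans (pref_succ Δ Θ hΘ k))
    · rw [h']

theorem get_w {n i : ℕ} (h : i < (prefixes Δ Θ n).length) :
    (prefixes Δ Θ n)[i] = word Δ Θ i := by
  have hi1 : i < (prefixes Δ Θ (i+1)).length := lt_of_lt_of_le (by omega) (len_ge Δ Θ hΘ (i+1))
  rw [word, List.getD_eq_getElem _ _ hi1]
  rcases le_total n (i+1) with hle | hle
  · exact (pref_mono Δ Θ hΘ hle).getElem h
  · exact ((pref_mono Δ Θ hΘ hle).getElem hi1).symm

theorem delta_letter (n : ℕ) : Δ n = word Δ Θ ((prefixes Δ Θ n).length) := by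
  have h1 : ((prefixes Δ Θ n) ++ [Δ n])[(prefixes Δ Θ n).length]'(by simp) = Δ n := by
    simp
  have h2 := (pref_succ Δ Θ hΘ n).getElem
    (show (prefixes Δ Θ n).length < ((prefixes Δ Θ n) ++ [Δ n]).length by simp)
  rw [h1] at h2
  rw [h2, get_w Δ Θ hΘ]

/-- each `w (n+1)` gives an index palindrome of the charge of `Θ n`. -/
theorem pal_idx (n : ℕ) :
    ∃ c : Fin 2, Θ n = aff c ∧ IPal (word Δ Θ) c ((prefixes Δ Θ (n+1)).length) := by
  obtain ⟨c, hc⟩ := theta_aff Θ hΘ n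
  refine ⟨c, hc, ?_⟩
  have hpal := pal_succ Δ Θ hΘ n
  rw [hc] at hpal
  have := (isPal_iff_idx c (word Δ Θ) (prefixes Δ Θ (n+1))
    (fun i h => get_w Δ Θ hΘ h)).mp hpal
  exact this
end Machinery

-- ### Fin 2 helpers
theorem f2_h1 : ∀ x t : Fin 2, x + t + t = x := by decide
theorem f2_h2 : ∀ x t : Fin 2, x + (t + 1) + t = x + 1 := by decide
theorem f2_h3 : ∀ x y : Fin 2, x = y + 1 → y = x + 1 := by decide
theorem f2_h4 : ∀ x y : Fin 2, x ≠ y → x = y + 1 := by decide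
theorem f2_h5 : ∀ x : Fin 2, x ≠ x + 1 := by decide
theorem f2_h6 : ∀ x t : Fin 2, x + t = x + (t + 1) → False := by decide
theorem f2_h7 : ∀ x t : Fin 2, x + t + (t + 1) = x + 1 := by decide
theorem f2_h8 : ∀ x t : Fin 2, x + 1 + (t + 1) = x + t := by decide
theorem f2_h9 : ∀ x t : Fin 2, x + t + 1 + t = x + 1 := by decide
theorem f2_h10 : ∀ x t : Fin 2, x + 1 + t = x + (t + 1) := by decide
theorem f2_h11 : ∀ x y : Fin 2, x = y + 1 → x + 1 = y := by decide

/-- The core combinatorial contradiction: an infinite binary word cannot have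
three pseudopalindromic prefixes `K1 < l < l3` which are consecutive (no
pseudopalindromic prefix strictly in between), with charges `t+1, t, t`,
the pairing letter condition `u l = u K1 + 1`, and the two closure-minimality
conditions. -/
theorem core (u : ℕ → Fin 2) (t : Fin 2) (K1 l l3 : ℕ)
    (hK1 : 1 ≤ K1) (hl : K1 < l) (hl3 : l < l3)
    (p1 : IPal u (t+1) K1) (p2 : IPal u t l) (p3 : IPal u t l3)
    (hletter : u l = u K1 + 1)
    (Hmin1 : ∀ s, s ≤ K1 + 1 → (∀ i, i < K1 + 1 - s → u (K1 - i) = u (s + i) + t) →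
      l ≤ K1 + 1 + s)
    (Hmin2 : ∀ s, s ≤ l + 1 → (∀ i, i < l + 1 - s → u (l - i) = u (s + i) + t) →
      l3 ≤ l + 1 + s)
    (Hgap : ∀ K c, K1 < K → K < l3 → K ≠ l → ¬ IPal u c K) : False := by
  set D := l - K1 with hD
  set d := l3 - l with hd
  have hD1 : 1 ≤ D := by omega
  have hd1 : 1 ≤ d := by omega
  -- A1 : antiperiod D up to K1 (inclusive)
  have A1 : ∀ j, j ≤ K1 → u (j + D) = u j + 1 := by
    intro j hj
    rcases eq_or_lt_of_le hj with hj' | hj'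
    · have idx : j + D = l := by omega
      rw [idx, hj', hletter]
    · have e1 := p2 (K1 - 1 - j) (by omega)
      have idx : l - 1 - (K1 - 1 - j) = j + D := by omega
      rw [idx] at e1
      have e2 := p1 j (by omega)
      rw [e2] at e1
      rw [e1, f2_h2]
  -- A2 : period d below l
  have A2 : ∀ j, j < l → u (j + d) = u j := by
    intro j hj
    have e1 := p3 (l - 1 - j) (by omega)
    have idx : l3 - 1 - (l - 1 - j) = j + d := by omega
    rw [idx] at e1
    have e2 := p2 j hj
    rw [e2] at e1
    rw [e1, f2_h1]
  -- A3 : charge-1 palindromes have even length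
  have A3 : ∀ M, IPal u 1 M → M % 2 = 0 := by
    intro M hM
    by_contra hodd
    have h2 := hM (M / 2) (by omega)
    have idx : M - 1 - M / 2 = M / 2 := by omega
    rw [idx] at h2
    exact f2_h5 _ h2
  -- A4 : D ≤ K1 + 2
  have A4 : l ≤ 2 * K1 + 2 := by
    have := Hmin1 (K1 + 1) (le_refl _) (by intro i hi; omega)
    omega
  -- A5 : if t = 0 then D ≤ K1 + 1
  have A5 : t = 0 → l ≤ 2 * K1 + 1 := by
    intro ht
    have := Hmin1 K1 (by omega) ?_
    · omega
    · intro i hi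
      have : i = 0 := by omega
      subst this
      rw [ht]
      simp
  -- A7 : d ≤ 2D
  have A7 : d ≤ 2 * D := by
    rcases Nat.lt_or_ge (2 * K1) l with hD2 | hD2
    · -- D ≥ K1 + 1, i.e. l ∈ {2K1+1, 2K1+2}
      rcases Nat.eq_or_lt_of_le A4 with hc | hc
      · -- l = 2K1+2 : empty-suffix witness
        have := Hmin2 (l + 1) (le_refl _) (by intro i hi; omega)
        omega
      · -- l = 2K1+1, so t = 0 ; singleton witness
        have hl' : l = 2 * K1 + 1 := by omega
        have ht : t = 0 := by
          rcases (by decide : ∀ c : Fin 2, c = 0 ∨ c = 1) t with h | h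
          · exact h
          · exfalso
            have := A3 l (h ▸ p2)
            omega
        have := Hmin2 l (by omega) ?_
        · omega
        · intro i hi
          have : i = 0 := by omega
          subst this
          rw [ht]
          simp
    · -- D ≤ K1 : main witness at s = 2D - 1
      have hs : 2 * D - 1 ≤ l + 1 := by omega
      have := Hmin2 (2 * D - 1) hs ?_
      · omega
      · intro i hi
        rcases Nat.eq_zero_or_pos i with h0 | h0
        · subst h0
          have e1 := p2 (2 * D - 1) (by omega)
          have idx : l - 1 - (2 * D - 1) = K1 - D := by omega
          rw [idx] at e1
          have e2 := A1 (K1 - D) (by omega)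
          have idx2 : K1 - D + D = K1 := by omega
          rw [idx2] at e2
          -- e2 : u K1 = u (K1 - D) + 1 ; so u (K1 - D) = u K1 + 1 = u l
          have e3 : u (K1 - D) = u l := by
            have := f2_h3 _ _ e2
            rw [this, ← hletter]
          rw [e3] at e1
          -- e1 : u l = u (2D-1) + t ; goal: u (l - 0) = u (2D-1+0) + t
          simpa using e1
        · have e1 := p2 (i - 1) (by omega)
          have idx : l - 1 - (i - 1) = l - i := by omega
          rw [idx] at e1
          have e2 := A1 (i - 1) (by omega)
          have e3 := A1 (i - 1 + D) (by omega)
          have idx2 : i - 1 + D + D = 2 * D - 1 + i := by omega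
          rw [idx2, e2] at e3
          rw [f2_h1] at e3
          rw [e1, ← e3]
  -- now the case analysis on d
  rcases Nat.lt_or_ge d D with c1 | hge
  · -- c1 : d < D : palindrome prefix of length l - d in the gap (K1, l)
    have hpal : IPal u t (l - d) := by
      intro j hj
      have e1 := A2 (l - d - 1 - j) (by omega)
      have idx : l - d - 1 - j + d = l - 1 - j := by omega
      rw [idx] at e1
      rw [← e1]
      exact p2 j (by omega)
    exact Hgap (l - d) t (by omega) (by omega) (by omega) hpal
  rcases Nat.eq_or_lt_of_le hge with c2 | hgt
  · -- c2 : d = D : prefix K1 has both charges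
    have hpal : IPal u t K1 := by
      intro j hj
      have e1 := A2 (K1 - 1 - j) (by omega)
      have idx : K1 - 1 - j + d = l - 1 - j := by omega
      rw [idx] at e1
      rw [← e1]
      exact p2 j (by omega)
    have h1 := hpal 0 (by omega)
    have h2 := p1 0 (by omega)
    rw [h1] at h2
    exact f2_h6 _ _ h2
  rcases Nat.eq_or_lt_of_le A7 with c4 | hlt2D
  · -- c4 : d = 2D : midpoint palindrome at l + D
    have antiFull : ∀ x, x < l → u (x + D) = u x + 1 := by
      intro x hx
      rcases le_or_gt x K1 with hx' | hx'
      · exact A1 x hx'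
      · have e1 := p3 (l + D - 1 - x) (by omega)
        have idx : l3 - 1 - (l + D - 1 - x) = x + D := by omega
        rw [idx] at e1
        have e2 := A1 (l - 1 - x) (by omega)
        have idx2 : l - 1 - x + D = l + D - 1 - x := by omega
        rw [idx2] at e2
        have e3 := p2 x (by omega)
        rw [e2, e3] at e1
        rw [e1, f2_h9]
    have hpal : IPal u (t + 1) (l + D) := by
      intro j hj
      rcases le_or_gt D j with hj' | hj'
      · have e1 := p2 (j - D) (by omega)
        have idx : l - 1 - (j - D) = l + D - 1 - j := by omega
        rw [idx] at e1
        have e2 := antiFull (j - D) (by omega)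
        have idx2 : j - D + D = j := by omega
        rw [idx2] at e2
        have e3 := f2_h3 _ _ e2
        rw [e3] at e1
        rw [e1, f2_h10]
      · have e1 := p3 (D + j) (by omega)
        have idx : l3 - 1 - (D + j) = l + D - 1 - j := by omega
        rw [idx] at e1
        have e2 := antiFull j (by omega)
        have idx2 : j + D = D + j := by omega
        rw [idx2] at e2
        rw [e2] at e1
        rw [e1, f2_h10]
    exact Hgap (l + D) (t + 1) (by omega) (by omega) (by omega) hpal
  -- remaining : D < d < 2D
  rcases le_or_gt d l with c3 | c5
  · -- c3 : D < d ≤ l, d < 2D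
    set G := d - D with hG
    set K := l - d with hK
    have hG1 : 1 ≤ G := by omega
    have hGD : G < D := by omega
    have hKK : K = K1 - G := by omega
    have hKle : K ≤ K1 := by omega
    have IPK : IPal u t K := by
      intro j hj
      have e1 := A2 (K - 1 - j) (by omega)
      have idx : K - 1 - j + d = l - 1 - j := by omega
      rw [idx] at e1
      rw [← e1]
      exact p2 j (by omega)
    have uK : u K = u l := by
      have := A2 K (by omega)
      have idx : K + d = l := by omega
      rw [idx] at this
      exact this.symm
    have uK1 : u K = u K1 + 1 := by rw [uK, hletter]
    have antiG : ∀ j, j ≤ K → u (j + G) = u j + 1 := by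
      intro j hj
      rcases eq_or_lt_of_le hj with hj' | hj'
      · subst hj'
        have idx : K + G = K1 := by omega
        rw [idx]
        exact f2_h3 _ _ uK1
      · have e1 := p1 (K - 1 - j) (by omega)
        have idx : K1 - 1 - (K - 1 - j) = j + G := by omega
        rw [idx] at e1
        have e2 := IPK j hj'
        rw [e2] at e1
        rw [e1, f2_h7]
    have cond : ∀ i, i < K1 + 1 - (G - 1) → u (K1 - i) = u (G - 1 + i) + t := by
      intro i hi
      rcases Nat.eq_zero_or_pos i with h0 | h0
      · subst h0
        have e1 := p1 (K1 - G) (by omega)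
        have idx : K1 - 1 - (K1 - G) = G - 1 := by omega
        rw [idx] at e1
        have e2 : u (K1 - G) = u K1 + 1 := by rw [← hKK]; exact uK1
        rw [e2] at e1
        -- e1 : u (G-1) = u K1 + 1 + (t+1) = u K1 + t
        rw [f2_h8] at e1
        simp only [Nat.add_zero, Nat.sub_zero]
        rw [e1, f2_h1]
      · have e1 := p1 (i - 1) (by omega)
        have idx : K1 - 1 - (i - 1) = K1 - i := by omega
        rw [idx] at e1
        have e2 := antiG (i - 1) (by omega)
        have idx2 : i - 1 + G = G - 1 + i := by omega
        rw [idx2] at e2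
        rw [e1, e2, f2_h10]
    have := Hmin1 (G - 1) (by omega) cond
    omega
  · -- c5 : d > l, D < d < 2D : parity contradiction
    have hDK : D = K1 + 2 := by omega
    have ht : t = 1 := by
      rcases (by decide : ∀ c : Fin 2, c = 0 ∨ c = 1) t with h | h
      · exfalso
        have := A5 h
        omega
      · exact h
    have he1 := A3 l (ht ▸ p2)
    have he2 := A3 l3 (ht ▸ p3)
    omega

section Bridge
variable (Δ : ℕ → Fin 2) (Θ : ℕ → Fin 2 → Fin 2)
variable (hΘ : ∀ n, Θ n = Rb ∨ Θ n = Eb)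
include hΘ

theorem v_entries (n : ℕ) :
    ∀ j (h : j < (prefixes Δ Θ n ++ [Δ n]).length),
      (prefixes Δ Θ n ++ [Δ n])[j] = word Δ Θ j := by
  intro j h
  have hlen : (prefixes Δ Θ n ++ [Δ n]).length = (prefixes Δ Θ n).length + 1 := by simp
  rcases Nat.lt_or_ge j (prefixes Δ Θ n).length with hj | hj
  · rw [List.getElem_append_left hj]
    exact get_w Δ Θ hΘ hj
  · have hj' : j = (prefixes Δ Θ n).length := by omega
    subst hj'
    rw [List.getElem_concat_length]
    exact delta_letter Δ Θ hΘ n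
    rfl

theorem hmin_step (n s : ℕ) (t : Fin 2) (haffn : Θ n = aff t)
    (hs : s ≤ (prefixes Δ Θ n).length + 1)
    (cond : ∀ i, i < (prefixes Δ Θ n).length + 1 - s →
      word Δ Θ ((prefixes Δ Θ n).length - i) = word Δ Θ (s + i) + t) :
    (prefixes Δ Θ (n+1)).length ≤ (prefixes Δ Θ n).length + 1 + s := by
  set v := prefixes Δ Θ n ++ [Δ n] with hv
  have hvlen : v.length = (prefixes Δ Θ n).length + 1 := by simp [hv]
  have hdroppal : IsPal (aff t) (v.drop s) := by
    apply (isPal_iff_idx t (fun i => word Δ Θ (s + i)) (v.drop s) ?_).mpr ?_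
    · intro i h
      rw [List.getElem_drop]
      exact v_entries Δ Θ hΘ n (s + i) (by simp at h ⊢; omega)
    · intro i hi
      have hlen2 : (v.drop s).length = (prefixes Δ Θ n).length + 1 - s := by simp [hvlen]
      rw [hlen2] at hi ⊢
      have idx : s + ((prefixes Δ Θ n).length + 1 - s - 1 - i) =
          (prefixes Δ Θ n).length - i := by omega
      rw [idx]
      exact cond i hi
  have hpal : IsPal (Θ n) (v ++ anti (Θ n) (v.take s)) := by
    rw [haffn]
    have h2 := pal_ext (fun x => aff_aff t x) (v.take s) (v.drop s) hdroppal
    rwa [List.take_append_drop] at h2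
  have := min_succ Δ Θ hΘ n (v ++ anti (Θ n) (v.take s)) ⟨_, rfl⟩ hpal
  have hlen3 : (v ++ anti (Θ n) (v.take s)).length = v.length + min s v.length := by
    simp [anti_length]
  have hmin : min s v.length = s := by omega
  omega

theorem hgap_aux (hnorm : NormalizedB Δ Θ) (K : ℕ) (c : Fin 2)
    (hpal : IPal (word Δ Θ) c K) : ∃ n, (prefixes Δ Θ n).length = K := by
  set p : List (Fin 2) := List.ofFn (fun j : Fin K => word Δ Θ j) with hp
  have hplen : p.length = K := by simp [hp]
  have hent : ∀ i (h : i < p.length), p[i] = word Δ Θ i := by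
    intro i h
    simp [hp]
  have hpref : IsPref p (word Δ Θ) := by
    intro i hi
    rw [List.getD_eq_getElem _ _ hi]
    exact hent i hi
  have hpalp : IsPal Rb p ∨ IsPal Eb p := by
    have hiff := isPal_iff_idx c (word Δ Θ) p hent
    have : IsPal (aff c) p := by
      apply hiff.mpr
      intro i hi
      rw [hplen] at hi ⊢
      exact hpal i hi
    rcases (by decide : ∀ x : Fin 2, x = 0 ∨ x = 1) c with h | h
    · left; rwa [Rb_aff, ← h]
    · right; rwa [Eb_aff, ← h]
  obtain ⟨n, hn⟩ := hnorm p hpref hpalp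
  exact ⟨n, by rw [hn, hplen]⟩

omit hΘ in
theorem rb_ne_eb' : (Rb : Fin 2 → Fin 2) ≠ Eb := by
  intro h
  have := congrFun h 0
  revert this
  decide

theorem len_mono {a b : ℕ} (h : a ≤ b) :
    (prefixes Δ Θ a).length ≤ (prefixes Δ Θ b).length := by
  rcases eq_or_lt_of_le h with h' | h'
  · rw [h']
  · exact le_of_lt (len_strict_mono Δ Θ hΘ h')

/-- if the antimorphism changes then the following letter changes (under hcond). -/
theorem delta_flip (n : ℕ) (a0 : Fin 2) (ϑ0 : Fin 2 → Fin 2) (hϑ0 : ϑ0 = Rb ∨ ϑ0 = Eb)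
    (hchg : Θ n ≠ Θ (n+1))
    (hc1 : Δ (n+1) = a0 ↔ Θ n = ϑ0) (hc2 : Δ (n+2) = a0 ↔ Θ (n+1) = ϑ0) :
    Δ (n+1) ≠ Δ (n+2) := by
  have hne := rb_ne_eb'
  have hne2 := Ne.symm rb_ne_eb'
  have hiff : ¬(Θ n = ϑ0 ↔ Θ (n+1) = ϑ0) := by
    rcases hΘ n with h1 | h1 <;> rcases hΘ (n+1) with h2 | h2 <;>
      rcases hϑ0 with h3 | h3 <;> simp_all
  intro heq
  apply hiff
  rw [← hc1, ← hc2, heq]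

/-- the configuration change-then-repeat is impossible. -/
theorem config (hnorm : NormalizedB Δ Θ) (m : ℕ) (a0 : Fin 2) (ϑ0 : Fin 2 → Fin 2)
    (hϑ0 : ϑ0 = Rb ∨ ϑ0 = Eb)
    (hchg : Θ m ≠ Θ (m+1)) (hrep : Θ (m+1) = Θ (m+2))
    (hc1 : Δ (m+1) = a0 ↔ Θ m = ϑ0) (hc2 : Δ (m+2) = a0 ↔ Θ (m+1) = ϑ0) : False := by
  obtain ⟨c1, haff1, P1⟩ := pal_idx Δ Θ hΘ m
  obtain ⟨c2, haff2, P2⟩ := pal_idx Δ Θ hΘ (m+1)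
  obtain ⟨c3, haff3, P3⟩ := pal_idx Δ Θ hΘ (m+2)
  have hc23 : c2 = c3 := by
    apply aff_inj
    rw [← haff2, ← haff3, hrep]
  have hc12 : c1 = c2 + 1 := by
    apply f2_h4
    intro h
    apply hchg
    rw [haff1, haff2, h]
  have hdelta : Δ (m+1) ≠ Δ (m+2) := delta_flip Δ Θ hΘ m a0 ϑ0 hϑ0 hchg hc1 hc2
  have hletter : word Δ Θ ((prefixes Δ Θ (m+2)).length) =
      word Δ Θ ((prefixes Δ Θ (m+1)).length) + 1 := by
    have d1 := delta_letter Δ Θ hΘ (m+1)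
    have d2 := delta_letter Δ Θ hΘ (m+2)
    rw [← d1, ← d2]
    exact f2_h4 _ _ (Ne.symm hdelta)
  apply core (word Δ Θ) c2 ((prefixes Δ Θ (m+1)).length) ((prefixes Δ Θ (m+2)).length)
    ((prefixes Δ Θ (m+3)).length)
  · have := len_ge Δ Θ hΘ (m+1); omega
  · exact len_strict_mono Δ Θ hΘ (by omega)
  · exact len_strict_mono Δ Θ hΘ (by omega)
  · rw [← hc12]; exact P1
  · exact P2
  · rw [hc23]; exact P3
  · exact hletter
  · intro s hs cond
    exact hmin_step Δ Θ hΘ (m+1) s c2 (by rw [haff2]) hs cond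
  · intro s hs cond
    exact hmin_step Δ Θ hΘ (m+2) s c2 (by rw [haff3, hc23]) hs cond
  · intro K c h1 h2 h3 hpal
    obtain ⟨n, hn⟩ := hgap_aux Δ Θ hΘ hnorm K c hpal
    have hn1 : ¬ (n ≤ m+1) := by
      intro hle
      have := len_mono Δ Θ hΘ hle
      omega
    have hn2 : n ≠ m + 2 := by
      intro he
      rw [he] at hn
      omega
    have hn3 : m + 3 ≤ n := by omega
    have := len_mono Δ Θ hΘ hn3
    omega
end Bridge

end GPS

namespace GPS

/-- a normalized binary directive bi-sequence satisfying the
periodicity condition and containing both `E` and `R` infinitely many times has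
the form `Δ = ν b a^i (a ā)^ω`, `Θ = σ ϑ^{i+1} (ϑ̄ ϑ)^ω` with `|ν| = |σ|`. -/
theorem normalized_shape_binary (Δ : ℕ → Fin 2) (Θ : ℕ → Fin 2 → Fin 2)
    (hΘ : ∀ n, Θ n = Rb ∨ Θ n = Eb)
    (hnorm : NormalizedB Δ Θ)
    (hcond : ∃ a : Fin 2, ∃ ϑ : Fin 2 → Fin 2, (ϑ = Rb ∨ ϑ = Eb) ∧
      ∃ n₀ : ℕ, ∀ n, n₀ ≤ n → (Δ (n + 1) = a ↔ Θ n = ϑ))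
    (hinfE : {n | Θ n = Eb}.Infinite) (hinfR : {n | Θ n = Rb}.Infinite) :
    ∃ m : ℕ, ∃ a b : Fin 2, ∃ ϑ ϑ' : Fin 2 → Fin 2,
      ((ϑ = Rb ∧ ϑ' = Eb) ∨ (ϑ = Eb ∧ ϑ' = Rb)) ∧
      ∃ i : ℕ,
        Δ m = b ∧
        (∀ l : ℕ, 1 ≤ l → l ≤ i → Δ (m + l) = a) ∧
        (∀ l : ℕ, l ≤ i → Θ (m + l) = ϑ) ∧
        (∀ l : ℕ, Δ (m + i + 1 + 2*l) = a ∧ Δ (m + i + 2 + 2*l) = Eb a ∧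
          Θ (m + i + 1 + 2*l) = ϑ' ∧ Θ (m + i + 2 + 2*l) = ϑ) := by
  classical
  obtain ⟨a0, ϑ0, hϑ0, n₀, hcond⟩ := hcond
  -- changes of antimorphism occur beyond any bound
  have hchg_ex : ∀ N, ∃ m, N ≤ m ∧ Θ m ≠ Θ (m+1) := by
    intro N
    by_contra h
    push_neg at h
    have hconst : ∀ k, N ≤ k → Θ k = Θ N := by
      intro k hk
      induction k with
      | zero => rw [Nat.le_zero.mp hk]
      | succ j ih =>
        rcases Nat.le_succ_iff.mp hk with h' | h'
        · rw [← h j h', ih h']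
        · rw [h']
    obtain ⟨i, hiS, hiN⟩ := hinfE.exists_gt N
    obtain ⟨j, hjS, hjN⟩ := hinfR.exists_gt N
    have h1 : Θ i = Eb := hiS
    have h2 : Θ j = Rb := hjS
    have := rb_ne_eb'
    rw [hconst i (by omega), hconst j (by omega)] at *
    exact this (h2.symm.trans h1)
  -- the antimorphism sequence is eventually strictly alternating
  have halt : ∃ M, n₀ ≤ M ∧ ∀ n, M ≤ n → Θ n ≠ Θ (n+1) := by
    by_contra h
    push_neg at h
    obtain ⟨m, hm1, hm2⟩ := hchg_ex n₀
    have hP : ∃ n, m + 1 ≤ n ∧ Θ n = Θ (n+1) := by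
      obtain ⟨n, hn1, hn2⟩ := h (m+1) (by omega)
      exact ⟨n, hn1, hn2⟩
    obtain ⟨hs1, hs2⟩ := Nat.find_spec hP
    have hchg2 : Θ (Nat.find hP - 1) ≠ Θ (Nat.find hP - 1 + 1) := by
      rcases Nat.eq_or_lt_of_le hs1 with he | hlt
      · have e : Nat.find hP - 1 = m := by omega
        rw [e]
        exact hm2
      · intro hcontra
        exact Nat.find_min hP (show Nat.find hP - 1 < Nat.find hP by omega)
          ⟨by omega, hcontra⟩
    have hrep2 : Θ (Nat.find hP - 1 + 1) = Θ (Nat.find hP - 1 + 2) := by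
      have e1 : Nat.find hP - 1 + 1 = Nat.find hP := by omega
      have e2 : Nat.find hP - 1 + 2 = Nat.find hP + 1 := by omega
      rw [e1, e2]
      exact hs2
    exact config Δ Θ hΘ hnorm (Nat.find hP - 1) a0 ϑ0 hϑ0 hchg2 hrep2
      (hcond (Nat.find hP - 1) (by omega)) (by
        have e2 : Nat.find hP - 1 + 1 + 1 = Nat.find hP - 1 + 2 := by omega
        have := hcond (Nat.find hP - 1 + 1) (by omega)
        rwa [e2] at this)
  obtain ⟨M, hM0, hMalt⟩ := halt
  -- the alternation step for Θ
  have flip2 : ∀ n, M ≤ n → ∀ x y : Fin 2 → Fin 2,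
      ((x = Rb ∧ y = Eb) ∨ (x = Eb ∧ y = Rb)) → Θ n = x → Θ (n+1) = y := by
    intro n hn x y hxy hx
    have hne := hMalt n hn
    rcases hΘ (n+1) with h2 | h2 <;> rcases hxy with ⟨e1, e2⟩ | ⟨e1, e2⟩ <;>
      subst_vars <;> simp_all
  -- the alternation step for Δ
  have dflip : ∀ n, M ≤ n → Δ (n+2) = Δ (n+1) + 1 := by
    intro n hn
    have hne := delta_flip Δ Θ hΘ n a0 ϑ0 hϑ0 (hMalt n hn)
      (hcond n (le_trans hM0 hn)) (hcond (n+1) (by omega))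
    exact f2_h4 _ _ (Ne.symm hne)
  -- the Δ pattern
  have dpat : ∀ l, Δ (M + 2*l + 1) = Δ (M+1) ∧ Δ (M + 2*l + 2) = Δ (M+1) + 1 := by
    intro l
    induction l with
    | zero => exact ⟨by norm_num, by simpa using dflip M le_rfl⟩
    | succ k ih =>
      constructor
      · have e : M + 2*(k+1) + 1 = (M + 2*k + 1) + 2 := by ring
        rw [e, dflip (M + 2*k + 1) (by omega), ih.2, f2_h1]
      · have e : M + 2*(k+1) + 2 = (M + 2*k + 2) + 2 := by ring
        have e2 : M + 2*(k+1) + 1 = (M + 2*k + 2) + 1 := by ring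
        rw [e, dflip (M + 2*k + 2) (by omega), ← e2]
        have h3 : M + 2*(k+1) + 1 = (M + 2*k + 1) + 2 := by ring
        rw [h3, dflip (M + 2*k + 1) (by omega), ih.2, f2_h1]
  -- the Θ pattern
  have tpat : ∀ x y : Fin 2 → Fin 2, ((x = Rb ∧ y = Eb) ∨ (x = Eb ∧ y = Rb)) →
      Θ M = x → ∀ l, Θ (M + 2*l) = x ∧ Θ (M + 2*l + 1) = y := by
    intro x y hxy hx l
    have hyx : ((y = Rb ∧ x = Eb) ∨ (y = Eb ∧ x = Rb)) := by tauto
    induction l with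
    | zero => exact ⟨by simpa using hx, by
        have := flip2 M le_rfl x y hxy (by simpa using hx)
        simpa using this⟩
    | succ k ih =>
      have h1 : Θ (M + 2*(k+1)) = x := by
        have e : M + 2*(k+1) = (M + 2*k + 1) + 1 := by ring
        rw [e]
        exact flip2 (M + 2*k + 1) (by omega) y x hyx ih.2
      refine ⟨h1, ?_⟩
      exact flip2 (M + 2*(k+1)) (by omega) x y hxy h1
  -- assemble
  have main : ∀ x y : Fin 2 → Fin 2, ((x = Rb ∧ y = Eb) ∨ (x = Eb ∧ y = Rb)) → Θ M = x →
      ∃ m : ℕ, ∃ a b : Fin 2, ∃ ϑ ϑ' : Fin 2 → Fin 2,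
      ((ϑ = Rb ∧ ϑ' = Eb) ∨ (ϑ = Eb ∧ ϑ' = Rb)) ∧
      ∃ i : ℕ,
        Δ m = b ∧
        (∀ l : ℕ, 1 ≤ l → l ≤ i → Δ (m + l) = a) ∧
        (∀ l : ℕ, l ≤ i → Θ (m + l) = ϑ) ∧
        (∀ l : ℕ, Δ (m + i + 1 + 2*l) = a ∧ Δ (m + i + 2 + 2*l) = Eb a ∧
          Θ (m + i + 1 + 2*l) = ϑ' ∧ Θ (m + i + 2 + 2*l) = ϑ) := by
    intro x y hxy hx
    refine ⟨M, Δ (M+1), Δ M, x, y, hxy, 0, rfl, by omega, ?_, ?_⟩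
    · intro l hl
      have : l = 0 := by omega
      subst this
      simpa using hx
    · intro l
      refine ⟨?_, ?_, ?_, ?_⟩
      · have e : M + 0 + 1 + 2*l = M + 2*l + 1 := by ring
        rw [e, (dpat l).1]
      · have e : M + 0 + 2 + 2*l = M + 2*l + 2 := by ring
        rw [e, (dpat l).2]
        rfl
      · have e : M + 0 + 1 + 2*l = M + 2*l + 1 := by ring
        rw [e, (tpat x y hxy hx l).2]
      · have e : M + 0 + 2 + 2*l = M + 2*(l+1) := by ring
        rw [e, (tpat x y hxy hx (l+1)).1]
  rcases hΘ M with hM | hM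
  · exact main Rb Eb (Or.inl ⟨rfl, rfl⟩) hM
  · exact main Eb Rb (Or.inr ⟨rfl, rfl⟩) hM

end GPS
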